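/- Let c > 0, let (g_d)_{d≥1} be an i.i.d. sequence of random variables each with the Gamma distribution with shape c and rate 1, and let X = (1/(2π²)) Σ_{d=1}^{∞} g_d/((d − 1/2)²). Then for every real number ω and every t ≥ 0: E[exp(−(ω²/2 + t)X)] / E[exp(−(ω²/2)X)] = (cosh(ω/2) / cosh(½√(ω² + 2t)))^{c}. Equivalently, the exponentially tilted law Q with dQ/dP = exp(−ω²X/2)/E[exp(−ω²X/2)] satisfies ∫ e^{−tX} dQ = (cosh(ω/2)/cosh(½√(ω² + 2t)))^{c}. -/

import Mathlib

/-!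
Write `X = ∑ a_d g_d` with `a_d = 1 / (2π²(d + 1/2)²)`. Independence and the Gamma Laplace
transform `E[e^{-u g_d}] = (1 + u)^{-c}` give
`E[exp(-s ∑_{d<n} a_d g_d)] = ∏_{d<n} (1 + s a_d)^{-c}`, and dominated convergence passes to
the limit, the series converging almost surely because the `g_d` have mean `c` and
`∑ a_d < ∞`. For `s = x²/2` the infinite product is Euler's product
`cosh (x/2) = ∏_d (1 + x²/(π²(2d + 1)²))`, which follows from the sine product through
`cosh = sinh (2·) / (2 sinh)`. Hence `E[exp(-(x²/2) X)] = cosh (x/2)^{-c}`, and the tilted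
Laplace transform is the quotient of two such values.
-/

open MeasureTheory Real ProbabilityTheory
open Filter Finset Topology

theorem Finset.prod_range_two_mul {M : Type*} [CommMonoid M] (f : ℕ → M) (n : ℕ) :
    ∏ j ∈ range (2 * n), f j = (∏ k ∈ range n, f (2 * k)) * ∏ k ∈ range n, f (2 * k + 1) := by
  induction n with
  | zero => simp
  | succ n ih =>
    rw [show 2 * (n + 1) = 2 * n + 1 + 1 by ring, prod_range_succ, prod_range_succ, ih,
      prod_range_succ, prod_range_succ]
    ac_rfl

theorem Real.tendsto_euler_sinh_prod (y : ℝ) :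
    Tendsto (fun n : ℕ => π * y * ∏ j ∈ range n, (1 + y ^ 2 / ((j : ℝ) + 1) ^ 2))
      atTop (𝓝 (sinh (π * y))) := by
  have hterm (j : ℕ) : (1 : ℂ) - ((y : ℂ) * Complex.I) ^ 2 / ((j : ℂ) + 1) ^ 2 =
      ((1 + y ^ 2 / ((j : ℝ) + 1) ^ 2 : ℝ) : ℂ) := by
    push_cast
    rw [mul_pow, Complex.I_sq]
    ring
  have h := Complex.tendsto_euler_sin_prod (y * Complex.I)
  simp_rw [hterm, ← Complex.ofReal_prod, ← mul_assoc, ← Complex.ofReal_mul,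
    Complex.sin_mul_I, ← Complex.ofReal_sinh, mul_right_comm _ Complex.I,
    ← Complex.ofReal_mul] at h
  simpa only [Function.comp_def, Complex.mul_I_im, Complex.ofReal_re] using
    (Complex.continuous_im.tendsto _).comp h

theorem Real.tendsto_euler_cosh_prod (y : ℝ) :
    Tendsto (fun n : ℕ => ∏ k ∈ range n, (1 + 4 * y ^ 2 / (2 * (k : ℝ) + 1) ^ 2))
      atTop (𝓝 (cosh (π * y))) := by
  rcases eq_or_ne y 0 with rfl | hy
  · simp
  set sinhProd : ℝ → ℕ → ℝ := fun y n => π * y * ∏ j ∈ range n, (1 + y ^ 2 / ((j : ℝ) + 1) ^ 2)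
  have hsplit (n : ℕ) : sinhProd (2 * y) (2 * n) =
      2 * sinhProd y n * ∏ k ∈ range n, (1 + 4 * y ^ 2 / (2 * (k : ℝ) + 1) ^ 2) := by
    have heven (k : ℕ) : 1 + (2 * y) ^ 2 / (((2 * k : ℕ) : ℝ) + 1) ^ 2 =
        1 + 4 * y ^ 2 / (2 * (k : ℝ) + 1) ^ 2 := by
      push_cast
      ring
    have hodd (k : ℕ) : 1 + (2 * y) ^ 2 / (((2 * k + 1 : ℕ) : ℝ) + 1) ^ 2 =
        1 + y ^ 2 / ((k : ℝ) + 1) ^ 2 := by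
      push_cast
      field_simp
      ring
    simp only [sinhProd, prod_range_two_mul, heven, hodd]
    ring
  have hne (n : ℕ) : 2 * sinhProd y n ≠ 0 :=
    mul_ne_zero two_ne_zero <| mul_ne_zero (mul_ne_zero pi_ne_zero hy) <|
      (prod_pos fun j _ => by positivity).ne'
  have hlim : Tendsto (fun n => sinhProd (2 * y) (2 * n) / (2 * sinhProd y n)) atTop
      (𝓝 (sinh (π * (2 * y)) / (2 * sinh (π * y)))) :=
    ((tendsto_euler_sinh_prod (2 * y)).comp (tendsto_id.const_mul_atTop' two_pos)).div
      ((tendsto_euler_sinh_prod y).const_mul 2) (by simp [hy, pi_ne_zero])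
  rw [show π * (2 * y) = 2 * (π * y) by ring, sinh_two_mul,
    mul_div_cancel_left₀ _ (by simp [hy, pi_ne_zero])] at hlim
  exact hlim.congr fun n => by rw [hsplit, mul_div_cancel_left₀ _ (hne n)]

namespace ProbabilityTheory

variable {a r : ℝ}

theorem ae_nonneg_gammaMeasure : ∀ᵐ x ∂gammaMeasure a r, 0 ≤ x := by
  simp only [ae_iff, not_le]
  exact (withDensity_apply _ measurableSet_Iio).trans (lintegral_gammaPDF_of_nonpos le_rfl)

theorem measurable_gammaPDF (a r : ℝ) : Measurable (gammaPDF a r) :=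
  (measurable_gammaPDFReal a r).ennreal_ofReal

theorem lintegral_ofReal_gammaMeasure_of_mul_gammaPDFReal {a' r' C : ℝ} {f : ℝ → ℝ}
    (ha : 0 < a) (hr : 0 < r) (ha' : 0 < a') (hr' : 0 < r') (hf : Measurable f)
    (h : ∀ x, 0 ≤ x → gammaPDFReal a r x * f x = C * gammaPDFReal a' r' x) :
    ∫⁻ x, ENNReal.ofReal (f x) ∂gammaMeasure a r = ENNReal.ofReal C := by
  have hpt (x : ℝ) :
      gammaPDF a r x * ENNReal.ofReal (f x) = ENNReal.ofReal C * gammaPDF a' r' x := by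
    rcases lt_or_ge x 0 with hx | hx
    · simp [gammaPDF_of_neg hx]
    · rw [gammaPDF, gammaPDF, ← ENNReal.ofReal_mul (gammaPDFReal_nonneg ha hr x), h x hx,
        ENNReal.ofReal_mul' (gammaPDFReal_nonneg ha' hr' x)]
  rw [gammaMeasure, lintegral_withDensity_eq_lintegral_mul _ (measurable_gammaPDF a r)
    hf.ennreal_ofReal]
  simp only [Pi.mul_apply, hpt]
  rw [lintegral_const_mul _ (measurable_gammaPDF a' r'),
    lintegral_gammaPDF_eq_one ha' hr', mul_one]

theorem lintegral_ofReal_gammaMeasure (ha : 0 < a) (hr : 0 < r) :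
    ∫⁻ x, ENNReal.ofReal x ∂gammaMeasure a r = ENNReal.ofReal (a / r) := by
  refine lintegral_ofReal_gammaMeasure_of_mul_gammaPDFReal ha hr (add_pos ha one_pos) hr
    measurable_id fun x hx => ?_
  have hxa : x ^ a = x ^ (a - 1) * x := by
    rw [← rpow_add_one' hx (by simpa using ha.ne'), sub_add_cancel]
  simp only [gammaPDFReal, if_pos hx, add_sub_cancel_right, Gamma_add_one ha.ne',
    rpow_add_one hr.ne', hxa]
  field_simp

theorem mgf_id_gammaMeasure {t : ℝ} (ha : 0 < a) (hr : 0 < r) (ht : t < r) :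
    mgf id (gammaMeasure a r) t = (r / (r - t)) ^ a := by
  have hrt : 0 < r - t := sub_pos.2 ht
  have hlin : ∫⁻ x, ENNReal.ofReal (exp (t * x)) ∂gammaMeasure a r =
      ENNReal.ofReal ((r / (r - t)) ^ a) := by
    refine lintegral_ofReal_gammaMeasure_of_mul_gammaPDFReal ha hr ha hrt (by fun_prop)
      fun x hx => ?_
    have hexp : exp (-((r - t) * x)) = exp (-(r * x)) * exp (t * x) := by
      rw [← exp_add]; ring_nf
    simp only [gammaPDFReal, if_pos hx, div_rpow hr.le hrt.le, hexp]
    field_simp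
  rw [mgf, integral_eq_lintegral_of_nonneg_ae (ae_of_all _ fun x => (exp_pos _).le)
    (by fun_prop)]
  simp only [id]
  rw [hlin, ENNReal.toReal_ofReal (by positivity)]

section GammaSeries

variable {Ω ι : Type*} [MeasurableSpace Ω] {P : Measure Ω}

theorem aemeasurable_of_map_eq_gammaMeasure {f : Ω → ℝ} (ha : 0 < a) (hr : 0 < r)
    (hf : P.map f = gammaMeasure a r) : AEMeasurable f P := by
  have := isProbabilityMeasure_gammaMeasure ha hr
  exact AEMeasurable.of_map_ne_zero (hf ▸ IsProbabilityMeasure.ne_zero _)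

theorem ae_nonneg_of_map_eq_gammaMeasure {f : Ω → ℝ} (ha : 0 < a) (hr : 0 < r)
    (hf : P.map f = gammaMeasure a r) : ∀ᵐ ω ∂P, 0 ≤ f ω :=
  ae_of_ae_map (aemeasurable_of_map_eq_gammaMeasure ha hr hf) (hf ▸ ae_nonneg_gammaMeasure)

theorem ae_summable_mul_of_map_eq_gammaMeasure [Countable ι] {g : ι → Ω → ℝ} {w : ι → ℝ}
    (ha : 0 < a) (hr : 0 < r) (hg : ∀ d, P.map (g d) = gammaMeasure a r)
    (hw0 : ∀ d, 0 ≤ w d) (hw : Summable w) :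
    ∀ᵐ ω ∂P, Summable fun d => w d * g d ω := by
  have hmeas d := aemeasurable_of_map_eq_gammaMeasure ha hr (hg d)
  have hnn : ∀ᵐ ω ∂P, ∀ d, 0 ≤ g d ω :=
    ae_all_iff.2 fun d => ae_nonneg_of_map_eq_gammaMeasure ha hr (hg d)
  have hterm d : AEMeasurable (fun ω => ENNReal.ofReal (w d * g d ω)) P :=
    ((hmeas d).const_mul (w d)).ennreal_ofReal
  have hmean d : ∫⁻ ω, ENNReal.ofReal (w d * g d ω) ∂P =
      ENNReal.ofReal (w d) * ENNReal.ofReal (a / r) := by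
    simp_rw [ENNReal.ofReal_mul (hw0 d)]
    rw [lintegral_const_mul'' _ (hmeas d).ennreal_ofReal,
      ← lintegral_map' ENNReal.measurable_ofReal.aemeasurable (hmeas d), hg d,
      lintegral_ofReal_gammaMeasure ha hr]
  have hfin : ∫⁻ ω, ∑' d, ENNReal.ofReal (w d * g d ω) ∂P ≠ ⊤ := by
    rw [lintegral_tsum hterm]
    simp_rw [hmean]
    rw [ENNReal.tsum_mul_right, ← ENNReal.ofReal_tsum_of_nonneg hw0 hw]
    exact ENNReal.mul_ne_top ENNReal.ofReal_ne_top ENNReal.ofReal_ne_top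
  filter_upwards [ae_lt_top' (AEMeasurable.tsum hterm) hfin, hnn] with ω hlt hω
  exact (ENNReal.summable_toReal hlt.ne).congr fun d =>
    ENNReal.toReal_ofReal (mul_nonneg (hw0 d) (hω d))

theorem iIndepFun.mgf_sum_mul_of_map_eq_gammaMeasure {g : ι → Ω → ℝ} {w : ι → ℝ} {t : ℝ}
    (hind : iIndepFun g P) (ha : 0 < a) (hr : 0 < r) (hg : ∀ d, P.map (g d) = gammaMeasure a r)
    (s : Finset ι) (ht : ∀ d ∈ s, w d * t < r) :
    mgf (fun ω => ∑ d ∈ s, w d * g d ω) P t = ∏ d ∈ s, (r / (r - w d * t)) ^ a := by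
  have hmeas d := aemeasurable_of_map_eq_gammaMeasure ha hr (hg d)
  have hsum := (hind.comp (fun d x => w d * x) fun d => measurable_const_mul (w d)).mgf_sum₀
    (fun d => (hmeas d).const_mul (w d)) s (t := t)
  have hfun : (fun ω => ∑ d ∈ s, w d * g d ω) = ∑ d ∈ s, (fun x => w d * x) ∘ g d := by
    ext ω
    simp
  rw [hfun, hsum]
  refine prod_congr rfl fun d hd => ?_
  change mgf (fun ω => w d * g d ω) P t = _
  rw [mgf_const_mul, ← mgf_id_map (hmeas d), hg d, mgf_id_gammaMeasure ha hr (ht d hd)]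

theorem tendsto_prod_rpow_integral_exp_neg_mul_tsum [IsProbabilityMeasure P] {g : ℕ → Ω → ℝ}
    {w : ℕ → ℝ} {s : ℝ} (hind : iIndepFun g P) (ha : 0 < a) (hr : 0 < r)
    (hg : ∀ d, P.map (g d) = gammaMeasure a r) (hw0 : ∀ d, 0 ≤ w d) (hw : Summable w)
    (hs : 0 ≤ s) :
    Tendsto (fun n => ∏ d ∈ range n, (r / (r + w d * s)) ^ a) atTop
      (𝓝 (∫ ω, exp (-s * ∑' d, w d * g d ω) ∂P)) := by
  have hmeas d := aemeasurable_of_map_eq_gammaMeasure ha hr (hg d)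
  have hnn : ∀ᵐ ω ∂P, ∀ d, 0 ≤ g d ω :=
    ae_all_iff.2 fun d => ae_nonneg_of_map_eq_gammaMeasure ha hr (hg d)
  have hpartial n : ∫ ω, exp (-s * ∑ d ∈ range n, w d * g d ω) ∂P =
      ∏ d ∈ range n, (r / (r + w d * s)) ^ a := by
    have := hind.mgf_sum_mul_of_map_eq_gammaMeasure ha hr hg (range n) (w := w) (t := -s)
      fun d _ => by nlinarith [hw0 d]
    simpa only [mgf, mul_neg, sub_neg_eq_add] using this
  refine (tendsto_integral_of_dominated_convergence (fun _ => 1) (fun n => ?_)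
    (integrable_const 1) (fun n => ?_) ?_).congr hpartial
  · fun_prop
  · filter_upwards [hnn] with ω hω
    rw [norm_of_nonneg (exp_pos _).le, exp_le_one_iff, neg_mul, neg_nonpos]
    exact mul_nonneg hs (sum_nonneg fun d _ => mul_nonneg (hw0 d) (hω d))
  · filter_upwards [ae_summable_mul_of_map_eq_gammaMeasure ha hr hg hw0 hw] with ω hω
    exact (continuous_exp.tendsto _).comp (hω.hasSum.tendsto_sum_nat.const_mul (-s))

end GammaSeries

end ProbabilityTheory

theorem integral_exp_neg_sq_div_two_mul_polyaGamma {Ω : Type*} [MeasurableSpace Ω]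
    {P : Measure Ω} [IsProbabilityMeasure P] {c : ℝ} {g : ℕ → Ω → ℝ} {X : Ω → ℝ} (hc : 0 < c)
    (hindep : iIndepFun g P) (hdist : ∀ d, P.map (g d) = gammaMeasure c 1)
    (hX : ∀ w, X w = 1 / (2 * π ^ 2) * ∑' d : ℕ, g d w / ((d : ℝ) + 1 / 2) ^ 2) (x : ℝ) :
    ∫ w, exp (-(x ^ 2 / 2) * X w) ∂P = cosh (x / 2) ^ (-c) := by
  set a : ℕ → ℝ := fun d => 1 / (2 * π ^ 2 * ((d : ℝ) + 1 / 2) ^ 2)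
  have hXa w : X w = ∑' d, a d * g d w := by
    rw [hX, ← tsum_mul_left]
    congr with d
    simp only [a]
    field_simp
  have ha : Summable a := by
    have h := (summable_one_div_nat_add_rpow (1 / 2) 2).2 one_lt_two
    refine (h.mul_left (1 / (2 * π ^ 2))).congr fun d => ?_
    rw [abs_of_pos (by positivity), rpow_two]
    simp only [a]
    field_simp
  have hcosh : Tendsto (fun n => ∏ d ∈ range n, (1 + a d * (x ^ 2 / 2))) atTop
      (𝓝 (cosh (x / 2))) := by
    have h := tendsto_euler_cosh_prod (x / (2 * π))
    rw [show π * (x / (2 * π)) = x / 2 by field_simp] at h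
    refine h.congr fun n => prod_congr rfl fun d _ => ?_
    simp only [a]
    field_simp
    ring
  have hlim := tendsto_prod_rpow_integral_exp_neg_mul_tsum hindep hc one_pos hdist
    (fun d => by positivity) ha (by positivity : 0 ≤ x ^ 2 / 2)
  simp_rw [← hXa] at hlim
  refine tendsto_nhds_unique hlim ?_
  have hprod n : ∏ d ∈ range n, (1 / (1 + a d * (x ^ 2 / 2))) ^ c =
      (∏ d ∈ range n, (1 + a d * (x ^ 2 / 2)))⁻¹ ^ c := by
    simp_rw [one_div]
    rw [finsetProd_rpow _ _ (fun d _ => by positivity), prod_inv_distrib]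
  have hpos := cosh_pos (x / 2)
  rw [rpow_neg hpos.le, ← inv_rpow hpos.le]
  exact ((hcosh.inv₀ hpos.ne').rpow_const (Or.inl (inv_ne_zero hpos.ne'))).congr
    fun n => (hprod n).symm

theorem tilted_polya_gamma_laplace_general {Ω : Type*} [MeasurableSpace Ω]
    (P : Measure Ω) [IsProbabilityMeasure P]
    (c : ℝ) (hc : 0 < c) (g : ℕ → Ω → ℝ)
    (hindep : iIndepFun g P)
    (hdist : ∀ d, P.map (g d) = gammaMeasure c 1)
    (X : Ω → ℝ)
    (hX : ∀ w, X w = 1 / (2 * Real.pi ^ 2) * ∑' d : ℕ, g d w / ((d : ℝ) + 1 / 2) ^ 2)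
    (ω t : ℝ) (ht : 0 ≤ t) :
    (∫ w, Real.exp (-(ω ^ 2 / 2 + t) * X w) ∂P) /
        (∫ w, Real.exp (-(ω ^ 2 / 2) * X w) ∂P) =
      (Real.cosh (ω / 2) / Real.cosh (Real.sqrt (ω ^ 2 + 2 * t) / 2)) ^ c := by
  have hsq : ω ^ 2 / 2 + t = √(ω ^ 2 + 2 * t) ^ 2 / 2 := by
    rw [sq_sqrt (by positivity)]
    ring
  rw [hsq, integral_exp_neg_sq_div_two_mul_polyaGamma hc hindep hdist hX,
    integral_exp_neg_sq_div_two_mul_polyaGamma hc hindep hdist hX,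
    div_rpow (cosh_pos _).le (cosh_pos _).le, rpow_neg (cosh_pos _).le,
    rpow_neg (cosh_pos _).le, inv_div_inv]

/-- Laplace transform of the exponentially tilted Polya-Gamma distribution PG(c, ω):
with `X` the Polya-Gamma PG(c, 0) random variable
`X = (1/(2π²)) Σ_{d≥1} g_d/(d - 1/2)²` (indexed here by `d : ℕ`, term `g d/(d + 1/2)²`),
where `(g_d)` are i.i.d. Gamma(c, 1), for every real `ω` and every `t ≥ 0`:
`E[exp(-(ω²/2 + t)X)] / E[exp(-(ω²/2)X)] = (cosh(ω/2)/cosh(½√(ω² + 2t)))^c`. -/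
theorem tilted_polya_gamma_laplace {Ω : Type*} [MeasurableSpace Ω]
    (P : Measure Ω) [IsProbabilityMeasure P]
    (c : ℝ) (hc : 0 < c) (g : ℕ → Ω → ℝ)
    (hmeas : ∀ d, Measurable (g d))
    (hindep : iIndepFun g P)
    (hdist : ∀ d, P.map (g d) = gammaMeasure c 1)
    (X : Ω → ℝ)
    (hX : ∀ w, X w = 1 / (2 * Real.pi ^ 2) * ∑' d : ℕ, g d w / ((d : ℝ) + 1 / 2) ^ 2)
    (ω t : ℝ) (ht : 0 ≤ t) :
    (∫ w, Real.exp (-(ω ^ 2 / 2 + t) * X w) ∂P) /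
        (∫ w, Real.exp (-(ω ^ 2 / 2) * X w) ∂P) =
      (Real.cosh (ω / 2) / Real.cosh (Real.sqrt (ω ^ 2 + 2 * t) / 2)) ^ c :=
  tilted_polya_gamma_laplace_general P c hc g hindep hdist X hX ω t ht
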